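/- Let φ : ℝ^d → ℝ^d be a C²-diffeomorphism and let ρ̃ = d(φ_# L_d)/dL_d be the Radon–Nikodym density of the push-forward of Lebesgue measure under φ. Then (ρ̃^{-1} ∇ρ̃) ∘ φ = div(J_φ^{-1}), i.e. the logarithmic gradient of ρ̃ composed with φ equals the columnwise divergence of the inverse Jacobian matrix. -/

import Mathlib

/-! Write `K = J⁻¹`, so that `ρt ∘ φ = det K = (det J)⁻¹`. By the chain rule
`(∂ᵢρt) ∘ φ = ∑ⱼ K_{ji} ∂ⱼ(ρt ∘ φ)`, and by Jacobi's formula `∂ⱼ(det K) = -det K · tr (K ∂ⱼJ)`, so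
the left-hand side is `-∑ⱼ K_{ji} tr (K ∂ⱼJ)`. Differentiating `K J = 1` gives `∂ⱼK = -K (∂ⱼJ) K`,
so the right-hand side is `-∑_{j,b,c} K_{jb} (∂ⱼJ)_{bc} K_{ci}`. The two sums agree because
`(∂ⱼJ)_{bc} = ∂ⱼ∂_c φ_b` is symmetric in `j` and `c`. -/

open MeasureTheory Metric Real

noncomputable section

abbrev Ed (d : ℕ) := EuclideanSpace ℝ (Fin d)

open Finset

theorem Matrix.det_updateCol_eq_sum_adjugate {R n : Type*} [CommRing R] [Fintype n]
    [DecidableEq n] (A : Matrix n n R) (i : n) (c : n → R) :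
    (A.updateCol i c).det = ∑ b, A.adjugate i b * c b := by
  rw [← cramer_apply, cramer_eq_adjugate_mulVec]; rfl

section MatrixCalculus

variable {E : Type*} [NormedAddCommGroup E] [NormedSpace ℝ E] {n : Type*} [Fintype n]
  [DecidableEq n] {A : E → Matrix n n ℝ} {A' : n → n → E →L[ℝ] ℝ} {x : E}

theorem hasFDerivAt_det (hA : ∀ a b, HasFDerivAt (fun y => A y a b) (A' a b) x) :
    HasFDerivAt (fun y => (A y).det) (∑ i, ∑ b, (A x).adjugate i b • A' b i) x := by
  have hprod (σ : Equiv.Perm n) : HasFDerivAt (fun y => ∏ i, A y (σ i) i)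
      (∑ i, (∏ j ∈ univ.erase i, A x (σ j) j) • A' (σ i) i) x :=
    .finsetProd fun i _ => hA (σ i) i
  simp_rw [Matrix.det_apply']
  refine (HasFDerivAt.fun_sum (u := univ) fun σ _ =>
    (hprod σ).const_mul (Equiv.Perm.sign σ : ℝ)).congr_fderiv ?_
  ext v
  simp only [FunLike.coe_sum, Finset.sum_apply, FunLike.coe_smul, Pi.smul_apply, smul_eq_mul,
    mul_sum]
  rw [sum_comm]
  refine sum_congr rfl fun i _ => ?_
  -- Collecting the terms that differentiate column `i` expands a determinant along that column.
  rw [← Matrix.det_updateCol_eq_sum_adjugate, Matrix.det_apply']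
  refine sum_congr rfl fun σ _ => ?_
  rw [← mul_prod_erase univ _ (mem_univ i), Matrix.updateCol_self, mul_comm (A' _ _ v)]
  congr 2
  exact prod_congr rfl fun j hj => by rw [Matrix.updateCol_ne (ne_of_mem_erase hj)]

theorem differentiableAt_adjugate_apply (hA : ∀ a b, DifferentiableAt ℝ (fun y => A y a b) x)
    (a c : n) : DifferentiableAt ℝ (fun y => (A y).adjugate a c) x := by
  simp_rw [Matrix.adjugate_apply]
  refine (hasFDerivAt_det fun k l => (?_ : DifferentiableAt ℝ _ x).hasFDerivAt).differentiableAt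
  rcases eq_or_ne k c with rfl | hk
  · simp only [Matrix.updateRow_self]
    exact differentiableAt_const _
  · simpa only [Matrix.updateRow_ne hk] using hA k l

theorem differentiableAt_inv_apply (hA : ∀ a b, DifferentiableAt ℝ (fun y => A y a b) x)
    (hx : (A x).det ≠ 0) (a c : n) : DifferentiableAt ℝ (fun y => (A y)⁻¹ a c) x := by
  simp only [Matrix.inv_def, Ring.inverse_eq_inv', Matrix.smul_apply, smul_eq_mul]
  exact ((hasFDerivAt_det fun k l => (hA k l).hasFDerivAt).differentiableAt.inv hx).mul
    (differentiableAt_adjugate_apply hA a c)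

theorem hasFDerivAt_inv_apply (hA : ∀ a b, HasFDerivAt (fun y => A y a b) (A' a b) x)
    (hx : (A x).det ≠ 0) (a c : n) :
    HasFDerivAt (fun y => (A y)⁻¹ a c)
      (-∑ b, ∑ b', ((A x)⁻¹ a b * (A x)⁻¹ b' c) • A' b b') x := by
  have hdiff := differentiableAt_inv_apply (fun a b => (hA a b).differentiableAt) hx
  set D := fun a c => fderiv ℝ (fun y => (A y)⁻¹ a c) x
  have hinv_mul : ∀ᶠ y in nhds x, (A y)⁻¹ * A y = 1 :=
    ((hasFDerivAt_det hA).continuousAt.eventually_ne hx).mono fun y hy =>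
      Matrix.nonsing_inv_mul _ (isUnit_iff_ne_zero.2 hy)
  -- `((A y)⁻¹ * A y) a b` is constant near `x`, so its derivative vanishes
  have hprod (a b : n) : ∑ c, ((A x)⁻¹ a c • A' c b + A x c b • D a c) = 0 := by
    refine (HasFDerivAt.fun_sum (u := univ) fun c _ =>
      (hdiff a c).hasFDerivAt.mul (hA c b)).unique ?_
    refine (hasFDerivAt_const ((1 : Matrix n n ℝ) a b) x).congr_of_eventuallyEq ?_
    filter_upwards [hinv_mul] with y hy
    rw [← hy, Matrix.mul_apply]
    rfl
  have hD : HasFDerivAt (fun y => (A y)⁻¹ a c) (D a c) x := (hdiff a c).hasFDerivAt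
  convert hD using 1
  ext v
  set B := (A x)⁻¹
  let Dv : Matrix n n ℝ := .of fun a c => D a c v
  let Av : Matrix n n ℝ := .of fun a b => A' a b v
  have hDA : Dv * A x = -(B * Av) := by
    ext a b
    have h := congr($(hprod a b) v)
    simp only [sum_add_distrib, add_apply, _root_.sum_apply, smul_apply, smul_eq_mul,
      zero_apply] at h
    simp only [Matrix.mul_apply, Matrix.neg_apply, Matrix.of_apply, Dv, Av]
    simp_rw [mul_comm (D a _ v)]
    linarith
  have hDv : Dv = -(B * Av * B) := by
    rw [← Matrix.mul_one Dv, ← Matrix.mul_nonsing_inv _ (isUnit_iff_ne_zero.2 hx),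
      ← Matrix.mul_assoc, hDA, Matrix.neg_mul]
  have h := congr($hDv a c)
  simp only [Matrix.neg_apply, Matrix.mul_apply, sum_mul, Matrix.of_apply, Dv, Av] at h
  simp only [FunLike.coe_neg, Pi.neg_apply, FunLike.coe_sum, Finset.sum_apply, FunLike.coe_smul,
    Pi.smul_apply, smul_eq_mul, h]
  rw [sum_comm]
  exact congrArg Neg.neg (sum_congr rfl fun b _ => sum_congr rfl fun b' _ => by ring)

theorem hasFDerivAt_det_inv (hA : ∀ a b, HasFDerivAt (fun y => A y a b) (A' a b) x)
    (hx : (A x).det ≠ 0) :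
    HasFDerivAt (fun y => (A y)⁻¹.det) (-(A x)⁻¹.det • ∑ i, ∑ b, (A x)⁻¹ i b • A' b i) x := by
  simp only [Matrix.det_nonsing_inv, Ring.inverse_eq_inv']
  refine ((hasFDerivAt_inv hx).comp x (hasFDerivAt_det hA)).congr_fderiv ?_
  ext v
  simp only [ContinuousLinearMap.comp_apply, _root_.sum_apply, smul_apply, smul_eq_mul, map_sum,
    ContinuousLinearMap.toSpanSingleton_apply, mul_neg, sum_neg_distrib, Matrix.inv_def,
    Ring.inverse_eq_inv', Matrix.smul_apply, mul_sum, neg_mul, neg_inj]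
  exact sum_congr rfl fun i _ => sum_congr rfl fun b _ => by ring

end MatrixCalculus

section SecondDerivative

variable {E F G : Type*} [NormedAddCommGroup E] [NormedSpace ℝ E] [NormedAddCommGroup F]
  [NormedSpace ℝ F] [NormedAddCommGroup G] [NormedSpace ℝ G] {φ : E → F} {x : E}

theorem ContDiffAt.hasFDerivAt_clm_fderiv_apply (hφ : ContDiffAt ℝ 2 φ x) (ℓ : F →L[ℝ] G)
    (v : E) :
    HasFDerivAt (fun y => ℓ (fderiv ℝ φ y v))
      ((ℓ.comp (ContinuousLinearMap.apply ℝ F v)).comp (fderiv ℝ (fderiv ℝ φ) x)) x :=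
  (ℓ.comp (ContinuousLinearMap.apply ℝ F v)).hasFDerivAt.comp x
    ((hφ.fderiv_right one_add_one_eq_two.le).differentiableAt one_ne_zero).hasFDerivAt

theorem ContDiffAt.fderiv_clm_fderiv_apply_comm (hφ : ContDiffAt ℝ 2 φ x) (ℓ : F →L[ℝ] G)
    (v w : E) :
    fderiv ℝ (fun y => ℓ (fderiv ℝ φ y v)) x w = fderiv ℝ (fun y => ℓ (fderiv ℝ φ y w)) x v := by
  simp only [(hφ.hasFDerivAt_clm_fderiv_apply ℓ _).fderiv, ContinuousLinearMap.comp_apply,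
    ContinuousLinearMap.apply_apply]
  rw [hφ.isSymmSndFDerivAt (by simp) w v]

end SecondDerivative

section EuclideanCoordinates

variable {ι : Type*} [Fintype ι] [DecidableEq ι]

theorem ContinuousLinearMap.apply_sum_smul_single_of_mul_eq_one
    (L : EuclideanSpace ℝ ι →L[ℝ] EuclideanSpace ℝ ι) {J K : Matrix ι ι ℝ}
    (hJ : ∀ a b, J a b = L (EuclideanSpace.single b 1) a) (hJK : J * K = 1) (i : ι) :
    L (∑ j, K j i • EuclideanSpace.single j 1) = EuclideanSpace.single i 1 := by
  ext a
  have h := congr($hJK a i)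
  simp only [Matrix.mul_apply, hJ, mul_comm, Matrix.one_apply] at h
  simpa only [map_sum, map_smul, WithLp.ofLp_sum, WithLp.ofLp_smul, Finset.sum_apply,
    Pi.smul_apply, smul_eq_mul, PiLp.single_apply, eq_comm] using h

theorem fderiv_apply_single_eq_sum_inv_smul {G : Type*} [NormedAddCommGroup G]
    [NormedSpace ℝ G] {φ : EuclideanSpace ℝ ι → EuclideanSpace ℝ ι}
    {ρ : EuclideanSpace ℝ ι → G} {x : EuclideanSpace ℝ ι} {J K : Matrix ι ι ℝ}
    (hρ : DifferentiableAt ℝ ρ (φ x)) (hφ : DifferentiableAt ℝ φ x)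
    (hJ : ∀ a b, J a b = fderiv ℝ φ x (EuclideanSpace.single b 1) a) (hJK : J * K = 1) (i : ι) :
    fderiv ℝ ρ (φ x) (EuclideanSpace.single i 1) =
      ∑ j, K j i • fderiv ℝ (ρ ∘ φ) x (EuclideanSpace.single j 1) := by
  rw [← (fderiv ℝ φ x).apply_sum_smul_single_of_mul_eq_one hJ hJK i, fderiv_comp x hρ hφ]
  simp

end EuclideanCoordinates

theorem sum_mul_sum_mul_eq_of_symm {R n : Type*} [CommSemiring R] [Fintype n] (K : Matrix n n R)
    (T : n → n → n → R) (hT : ∀ j c b, T j c b = T b c j) (i : n) :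
    ∑ j, K j i * ∑ b, ∑ c, K b c * T j c b = ∑ j, ∑ b, ∑ c, K j b * K c i * T j b c := by
  conv_rhs => enter [2, j]; rw [sum_comm]
  conv_rhs => rw [sum_comm]
  simp only [mul_sum]
  exact sum_congr rfl fun j _ => sum_congr rfl fun b _ => sum_congr rfl fun c _ => by
    rw [hT]; ring

theorem stmt4_general {d : ℕ} (φ : Ed d → Ed d)
    (hφ : ContDiff ℝ 2 φ)
    (J K : Ed d → Matrix (Fin d) (Fin d) ℝ)
    (hJ : ∀ x i j, J x i j = fderiv ℝ φ x (EuclideanSpace.single j 1) i)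
    (hdet : ∀ x, (J x).det ≠ 0)
    (hK : ∀ x, K x = (J x)⁻¹)
    (ρt : Ed d → ℝ) (hρdiff : Differentiable ℝ ρt)
    (hρφ : ∀ x, ρt (φ x) = (K x).det) :
    ∀ (x : Ed d) (i : Fin d),
      (ρt (φ x))⁻¹ * fderiv ℝ ρt (φ x) (EuclideanSpace.single i 1)
        = ∑ j, fderiv ℝ (fun y => K y j i) x (EuclideanSpace.single j 1) := by
  intro x i
  have hJ' (a b : Fin d) : HasFDerivAt (fun y => J y a b) (fderiv ℝ (fun y => J y a b) x) x := by
    simp_rw [hJ]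
    exact (hφ.contDiffAt.hasFDerivAt_clm_fderiv_apply (EuclideanSpace.proj a) _)
      |>.differentiableAt.hasFDerivAt
  have hsymm (a b j : Fin d) : fderiv ℝ (fun y => J y a b) x (EuclideanSpace.single j 1) =
      fderiv ℝ (fun y => J y a j) x (EuclideanSpace.single b 1) := by
    simp_rw [hJ]
    exact hφ.contDiffAt.fderiv_clm_fderiv_apply_comm (EuclideanSpace.proj a) _ _
  have hchain := fderiv_apply_single_eq_sum_inv_smul (hρdiff (φ x))
    (hφ.differentiable two_ne_zero x) (hJ x)
    (Matrix.mul_nonsing_inv _ (isUnit_iff_ne_zero.2 (hdet x))) i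
  have hρφ' : ρt ∘ φ = fun y => (J y)⁻¹.det :=
    funext fun y => by rw [Function.comp_apply, hρφ, hK]
  have hdetK : (J x)⁻¹.det ≠ 0 := by
    rw [Matrix.det_nonsing_inv, Ring.inverse_eq_inv']; exact inv_ne_zero (hdet x)
  simp only [hK] at hρφ ⊢
  rw [hchain, hρφ', hρφ, (hasFDerivAt_det_inv hJ' (hdet x)).fderiv]
  simp only [fun a c => (hasFDerivAt_inv_apply hJ' (hdet x) a c).fderiv, smul_apply, neg_apply,
    _root_.sum_apply, smul_eq_mul, sum_neg_distrib, neg_mul, mul_neg, ← mul_sum,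
    mul_left_comm _ (J x)⁻¹.det, mul_inv_cancel_left₀ hdetK]
  rw [sum_mul_sum_mul_eq_of_symm _
    (fun j c b => fderiv ℝ (fun y => J y c b) x (EuclideanSpace.single j 1))
    fun j c b => hsymm c b j]

/-- let `φ` be a `C²`-diffeomorphism and `ρt = d(φ_# L_d)/dL_d` the density of
the push-forward of Lebesgue measure, so that `ρt ∘ φ = det(J_φ⁻¹)` (assumed positive). Then
`(ρt⁻¹ ∇ρt) ∘ φ = div(J_φ⁻¹)`: the logarithmic gradient of `ρt` composed with `φ` equals the
columnwise divergence of the inverse Jacobian matrix `K = J_φ⁻¹`. -/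
theorem stmt4 {d : ℕ} (φ φinv : Ed d → Ed d)
    (hφ : ContDiff ℝ 2 φ) (hφinv : ContDiff ℝ 2 φinv)
    (hleft : Function.LeftInverse φinv φ) (hright : Function.RightInverse φinv φ)
    (J K : Ed d → Matrix (Fin d) (Fin d) ℝ)
    (hJ : ∀ x i j, J x i j = fderiv ℝ φ x (EuclideanSpace.single j 1) i)
    (hdet : ∀ x, (J x).det ≠ 0)
    (hK : ∀ x, K x = (J x)⁻¹)
    (ρt : Ed d → ℝ) (hρdiff : Differentiable ℝ ρt)
    (hdens : Measure.map φ (volume : Measure (Ed d))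
      = (volume : Measure (Ed d)).withDensity (fun x => ENNReal.ofReal (ρt x)))
    (hρφ : ∀ x, ρt (φ x) = (K x).det) (hKpos : ∀ x, 0 < (K x).det) :
    ∀ (x : Ed d) (i : Fin d),
      (ρt (φ x))⁻¹ * fderiv ℝ ρt (φ x) (EuclideanSpace.single i 1)
        = ∑ j, fderiv ℝ (fun y => K y j i) x (EuclideanSpace.single j 1) :=
  stmt4_general φ hφ J K hJ hdet hK ρt hρdiff hρφ
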